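/- For integers n > 1 and p with 1 < p < n and p | n, the sets A = { n^i : i ≥ 0 } and F = { n^{2i} : i ≥ 0 } ∪ { n^{2i+1} p : i ≥ 0 } are inequivalent under truncated division: there are no r, r' with A/r = F/r'. -/

import Mathlib

/-!
Along `n^k` the gcd with a fixed `r > 0` is eventually a constant `g`, so every large element
of `A/r` satisfies `x * g = n^j`; hence the ratio of two large elements of `A/r` is a power of `n`.
In `F/r'` the elements `n^{2i}/g'` and `n^{2i+1}p/g'` have the same eventual gcd `g'`
(since `n^{2i} ∣ n^{2i+1}p ∣ n^{2i+2}`), so their ratio is `np`, which lies strictly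
between `n` and `n^2`.
-/

/-- `S/r`: the image of `S ⊆ ℕ` under truncated division `m ↦ m / gcd(r,m)`. -/
def truncDiv (S : Set ℕ) (r : ℕ) : Set ℕ := (fun m => m / Nat.gcd r m) '' S

namespace Nat

theorem exists_gcd_pow_eventually_eq {r : ℕ} (hr : 0 < r) (n : ℕ) :
    ∃ K, ∀ k, K ≤ k → gcd r (n ^ k) = gcd r (n ^ K) := by
  obtain ⟨_, ⟨K, rfl⟩, hK⟩ := BddAbove.exists_isGreatest_of_nonempty
    (S := Set.range fun k => gcd r (n ^ k))
    ⟨r, by rintro _ ⟨k, rfl⟩; exact le_of_dvd hr (gcd_dvd_left _ _)⟩ (Set.range_nonempty _)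
  exact ⟨K, fun k hk => le_antisymm (hK ⟨k, rfl⟩)
    (le_of_dvd (gcd_pos_of_pos_left _ hr) (gcd_dvd_gcd_of_dvd_right r (pow_dvd_pow n hk)))⟩

theorem gcd_eq_of_dvd_of_dvd {r a m b : ℕ} (ham : a ∣ m) (hmb : m ∣ b)
    (hab : gcd r a = gcd r b) : gcd r m = gcd r a :=
  Nat.dvd_antisymm (hab ▸ gcd_dvd_gcd_of_dvd_right r hmb) (gcd_dvd_gcd_of_dvd_right r ham)

theorem pow_ne_pow_mul {n p : ℕ} (hp : 1 < p) (hpn : p < n) (j k : ℕ) :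
    n ^ k ≠ n ^ j * p := by
  intro hk
  have hn : 0 < n := by omega
  have hlow : n ^ j < n ^ k := hk ▸ lt_mul_of_one_lt_right (by positivity) hp
  have hhigh : n ^ k < n ^ (j + 1) := hk ▸ pow_succ n j ▸ mul_lt_mul_of_pos_left hpn (by positivity)
  rw [Nat.pow_lt_pow_iff_right (by omega)] at hlow hhigh
  omega

end Nat

theorem exists_mul_eq_pow_of_mem_truncDiv_powers {n r : ℕ} (hn : 0 < n) (hr : 0 < r) :
    ∃ g N, ∀ x ∈ truncDiv {m | ∃ i, m = n ^ i} r, N < x → ∃ j, x * g = n ^ j := by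
  obtain ⟨K, hK⟩ := Nat.exists_gcd_pow_eventually_eq hr n
  refine ⟨Nat.gcd r (n ^ K), n ^ K, ?_⟩
  rintro _ ⟨_, ⟨j, rfl⟩, rfl⟩ hlt
  have hKj : K ≤ j := by
    by_contra! h
    exact hlt.not_ge ((Nat.div_le_self _ _).trans (Nat.pow_le_pow_right hn h.le))
  exact ⟨j, by rw [← hK j hKj, Nat.div_mul_cancel (Nat.gcd_dvd_right _ _)]⟩

theorem exists_large_mem_truncDiv_with_mul_mem {n p r : ℕ} {S : Set ℕ} (hn : 1 < n) (hpn : p ∣ n)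
    (hr : 0 < r) (hS : ∀ i, n ^ (2 * i) ∈ S ∧ n ^ (2 * i + 1) * p ∈ S) (N : ℕ) :
    ∃ x, N < x ∧ x ∈ truncDiv S r ∧ n * p * x ∈ truncDiv S r := by
  obtain ⟨K, hK⟩ := Nat.exists_gcd_pow_eventually_eq hr n
  set i := K + r * N + 1
  set g := Nat.gcd r (n ^ (2 * i))
  have hg : Nat.gcd r (n ^ (2 * i + 1) * p) = g :=
    Nat.gcd_eq_of_dvd_of_dvd (b := n ^ (2 * i + 2))
      (dvd_mul_of_dvd_left (pow_dvd_pow n (by omega)) p)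
      (by rw [pow_succ n (2 * i + 1)]; exact mul_dvd_mul_left _ hpn)
      (by rw [hK (2 * i) (by omega), hK (2 * i + 2) (by omega)])
  have hgdvd : g ∣ n ^ (2 * i) := Nat.gcd_dvd_right _ _
  refine ⟨n ^ (2 * i) / g, ?_, ⟨_, (hS i).1, rfl⟩, ⟨_, (hS i).2, ?_⟩⟩
  · rw [Nat.lt_div_iff_mul_lt' hgdvd]
    calc g * N ≤ r * N := Nat.mul_le_mul_right _ (Nat.le_of_dvd hr (Nat.gcd_dvd_left _ _))
      _ < 2 * i := by omega
      _ < n ^ (2 * i) := Nat.lt_pow_self hn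
  · dsimp only
    rw [hg, ← Nat.mul_div_assoc _ hgdvd]
    congr 1
    ring

/-- For `1 < p < n` with `p ∣ n`, the sets `A = {n^i}` and
`F = {n^{2i}} ∪ {n^{2i+1}·p}` are inequivalent under truncated division. -/
theorem depthProfiles_G1_G3_inequivalent' (n p : ℕ) (hn : 1 < n) (hp : 1 < p)
    (hpn : p < n) (hdvd : p ∣ n) :
    ¬ ∃ r r' : ℕ, 0 < r ∧ 0 < r' ∧
      truncDiv {m | ∃ i : ℕ, m = n ^ i} r
        = truncDiv ({m | ∃ i : ℕ, m = n ^ (2 * i)}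
            ∪ {m | ∃ i : ℕ, m = n ^ (2 * i + 1) * p}) r' := by
  rintro ⟨r, r', hr, hr', hEq⟩
  obtain ⟨g, N, hA⟩ := exists_mul_eq_pow_of_mem_truncDiv_powers (by omega : 0 < n) hr
  obtain ⟨x, hNx, hx, hy⟩ := exists_large_mem_truncDiv_with_mul_mem hn hdvd hr'
    (S := {m | ∃ i : ℕ, m = n ^ (2 * i)} ∪ {m | ∃ i : ℕ, m = n ^ (2 * i + 1) * p})
    (fun i => ⟨Or.inl ⟨i, rfl⟩, Or.inr ⟨i, rfl⟩⟩) N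
  rw [← hEq] at hx hy
  obtain ⟨j, hj⟩ := hA x hx hNx
  obtain ⟨j', hj'⟩ := hA _ hy (hNx.trans_le (Nat.le_mul_of_pos_left _ (by positivity)))
  refine Nat.pow_ne_pow_mul hp hpn (j + 1) j' ?_
  rw [← hj', mul_assoc, hj]
  ring
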